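/- arXiv:1506.06184 — 6 statements merged into one kernel-verified Lean document; each statement's English description precedes it below -/
import Mathlib

section
/- Let R be a ring with 1 ≠ 0, Λ a partially ordered set, and J the free left R-module with basis e_{αβ} indexed by pairs α < β, with multiplication defined by e_{αβ}·e_{βγ} = e_{αγ} and e_{αβ}·e_{γδ} = 0 when β ≠ γ, extended R-bilinearly. Then J is a nil ring: every element of J is nilpotent. -/
/-!
McLain's ring `J`: the free left `R`-module with basis `e_{αβ}` indexed by
`Φ = {(α,β) : α < β}`, with multiplication `e_{αβ} e_{βγ} = e_{αγ}` and
`e_{αβ} e_{γδ} = 0` for `β ≠ γ`, extended `R`-bilinearly.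
-/

/-- The index set `Φ` of pairs `α < β`. -/
def McLainPhi (Λ : Type*) [PartialOrder Λ] := {p : Λ × Λ // p.1 < p.2}

/-- The free left `R`-module `J` on basis `Φ`. -/
def McLainJ (R : Type*) [Ring R] (Λ : Type*) [PartialOrder Λ] := McLainPhi Λ →₀ R

noncomputable instance (R : Type*) [Ring R] (Λ : Type*) [PartialOrder Λ] :
    AddCommGroup (McLainJ R Λ) := inferInstanceAs (AddCommGroup (McLainPhi Λ →₀ R))

/-- The bilinear multiplication on `J` determined by
`e_{αβ} e_{βγ} = e_{αγ}`, `e_{αβ} e_{γδ} = 0` if `β ≠ γ`. -/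
noncomputable def McLainJ.mul {R : Type*} [Ring R] {Λ : Type*} [PartialOrder Λ]
    [DecidableEq Λ] (x y : McLainJ R Λ) : McLainJ R Λ :=
  Finsupp.sum x fun p r => Finsupp.sum y fun q s =>
    if h : p.1.2 = q.1.1 then
      Finsupp.single (⟨(p.1.1, q.1.2), lt_trans (lt_of_lt_of_eq p.2 h) q.2⟩ : McLainPhi Λ)
        (r * s)
    else 0

/-- Powers with respect to the multiplication of `J`: `pow x n = x^(n+1)`. -/
noncomputable def McLainJ.pow {R : Type*} [Ring R] {Λ : Type*} [PartialOrder Λ]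
    [DecidableEq Λ] (x : McLainJ R Λ) : ℕ → McLainJ R Λ
  | 0 => x
  | n + 1 => McLainJ.mul x (McLainJ.pow x n)

/-!
Every basis vector `e_{αβ}` occurring in `x^(n+1)` arises from a product
`e_{α₀α₁} e_{α₁α₂} ⋯ e_{αₙαₙ₊₁}` of basis vectors occurring in `x`,
so `α = α₀ < α₁ < ⋯ < αₙ₊₁` is a chain of `n + 2` elements of the finite set of endpoints of pairs in the support of `x`.
Hence `x^(n+1) = 0` as soon as `n + 2` exceeds the number of those endpoints.
-/

namespace McLainJ

variable {R : Type*} [Ring R] {Λ : Type*} [PartialOrder Λ] [DecidableEq Λ]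

def endpoints (x : McLainJ R Λ) : Finset Λ :=
  (x : McLainPhi Λ →₀ R).support.image (fun p => p.1.1) ∪
    (x : McLainPhi Λ →₀ R).support.image (fun p => p.1.2)

lemma fst_mem_endpoints {x : McLainJ R Λ} {p : McLainPhi Λ}
    (hp : p ∈ (x : McLainPhi Λ →₀ R).support) : p.1.1 ∈ endpoints x :=
  Finset.mem_union_left _ (Finset.mem_image_of_mem _ hp)

lemma snd_mem_endpoints {x : McLainJ R Λ} {p : McLainPhi Λ}
    (hp : p ∈ (x : McLainPhi Λ →₀ R).support) : p.1.2 ∈ endpoints x :=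
  Finset.mem_union_right _ (Finset.mem_image_of_mem _ hp)

lemma mem_support_mul {x y : McLainJ R Λ} {q : McLainPhi Λ}
    (hq : q ∈ (McLainJ.mul x y : McLainPhi Λ →₀ R).support) :
    ∃ p ∈ (x : McLainPhi Λ →₀ R).support, ∃ p' ∈ (y : McLainPhi Λ →₀ R).support,
      p.1.2 = p'.1.1 ∧ q.1 = (p.1.1, p'.1.2) := by
  classical
  obtain ⟨p, hp, hq⟩ := Finset.mem_biUnion.mp (Finsupp.support_sum hq)
  obtain ⟨p', hp', hq⟩ := Finset.mem_biUnion.mp (Finsupp.support_sum hq)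
  refine ⟨p, hp, p', hp', ?_⟩
  by_cases hc : p.1.2 = p'.1.1
  -- `erw`: the `dite` is only visible after unfolding `McLainPhi Λ` to a subtype.
  · erw [dif_pos hc] at hq
    rw [Finset.mem_singleton.mp (Finsupp.support_single_subset hq)]
    exact ⟨hc, rfl⟩
  · erw [dif_neg hc] at hq
    exact absurd hq (Finsupp.notMem_support_iff.mpr rfl)

lemma exists_strictMono_of_mem_support_pow (x : McLainJ R Λ) :
    ∀ (n : ℕ), ∀ q ∈ (McLainJ.pow x n : McLainPhi Λ →₀ R).support,
      ∃ f : Fin (n + 2) → Λ, StrictMono f ∧ (∀ i, f i ∈ endpoints x) ∧ f 0 = q.1.1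
  | 0, q, hq => by
    refine ⟨![q.1.1, q.1.2], by simp [q.2], fun i => ?_, rfl⟩
    fin_cases i
    exacts [fst_mem_endpoints hq, snd_mem_endpoints hq]
  | n + 1, q, hq => by
    obtain ⟨p, hp, p', hp', hpp', hq⟩ := mem_support_mul hq
    obtain ⟨f, hf, hfx, hf0⟩ := exists_strictMono_of_mem_support_pow x n p' hp'
    refine ⟨Matrix.vecCons p.1.1 f, hf.vecCons (p.2.trans_eq (hpp'.trans hf0.symm)),
      Fin.cons (fst_mem_endpoints hp) hfx, by simp [hq]⟩

lemma pow_eq_zero_of_card_endpoints_lt (x : McLainJ R Λ) {n : ℕ}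
    (hn : (endpoints x).card < n + 2) : McLainJ.pow x n = 0 := by
  refine Finsupp.support_eq_empty.mp (Finset.eq_empty_of_forall_notMem fun q hq => ?_)
  obtain ⟨f, hf, hfx, -⟩ := exists_strictMono_of_mem_support_pow x n q hq
  have := Finset.univ.card_le_card_of_injOn f (fun i _ => hfx i) hf.injective.injOn
  rw [Finset.card_univ, Fintype.card_fin] at this
  omega

end McLainJ

theorem mcLainJ_isNil_general (R : Type*) [Ring R] (Λ : Type*) [PartialOrder Λ]
    [DecidableEq Λ] (x : McLainJ R Λ) : ∃ n : ℕ, McLainJ.pow x n = 0 :=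
  ⟨(McLainJ.endpoints x).card, McLainJ.pow_eq_zero_of_card_endpoints_lt x (by omega)⟩

/-- `J` is a nil ring: every element of `J` is nilpotent. -/
theorem mcLainJ_isNil (R : Type*) [Ring R] [Nontrivial R] (Λ : Type*) [PartialOrder Λ]
    [DecidableEq Λ] (x : McLainJ R Λ) : ∃ n : ℕ, McLainJ.pow x n = 0 :=
  mcLainJ_isNil_general R Λ x
end

section
/- For a closed subset Γ of Φ contained in a closed subset Γ₁, the pattern subgroup M(Γ) is a normal subgroup of M(Γ₁) if and only if Γ is normal in Γ₁, i.e., (α,β) ∈ Γ, (β,γ) ∈ Γ₁ implies (α,γ) ∈ Γ, and (α,β) ∈ Γ₁, (β,γ) ∈ Γ implies (α,γ) ∈ Γ. -/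
/-!
Conjugating root elements gives the relations
`x_{αβ}(r) x_{βδ}(s) x_{αβ}(r)⁻¹ = x_{βδ}(s) x_{αδ}(rs)` and
`x_{αβ}(r) x_{γα}(s) x_{αβ}(r)⁻¹ = x_{γα}(s) x_{γβ}(-sr)`, while root elements of
non-adjacent roots commute. If `Γ` is normal in `Γ₁`, the right-hand sides lie in `M(Γ)`, so the
generators of `M(Γ₁)` normalize `M(Γ)`. Conversely, for closed `Γ` every element of `M(Γ)` is
`1 + a` with `a` supported on `Γ`, so the root element `x_{αγ}(±1)` that these relations produce
from `M(Γ)` lies in `M(Γ)` only if `(α, γ) ∈ Γ`.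
-/

namespace McLain

/-- The endomorphism ring of the free right `R`-module on `Λ`. -/
abbrev E (R : Type*) [Ring R] (Λ : Type*) := Module.End Rᵐᵒᵖ (Λ →₀ R)

/-- Left multiplication by `r`, as an endomorphism of the right `R`-module `R`. -/
def lmul {R : Type*} [Ring R] (r : R) : R →ₗ[Rᵐᵒᵖ] R where
  toFun s := r * s
  map_add' := fun a b => mul_add r a b
  map_smul' := fun m s => by
    simp [MulOpposite.smul_eq_mul_unop, mul_assoc]

/-- The endomorphism corresponding to `r e_{αβ}`. -/
noncomputable def elt {R : Type*} [Ring R] {Λ : Type*} (α β : Λ) (r : R) : E R Λ :=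
  (Finsupp.lsingle α).comp ((lmul r).comp (Finsupp.lapply β))

/-- The unit `1 + r e_{αβ}` of `E`, for `α < β` (its inverse is `1 - r e_{αβ}`). -/
noncomputable def rootUnit {R : Type*} [Ring R] {Λ : Type*} [PartialOrder Λ]
    {α β : Λ} (h : α < β) (r : R) : (E R Λ)ˣ where
  val := 1 + elt α β r
  inv := 1 + elt α β (-r)
  val_inv := by
    apply LinearMap.ext; intro x
    simp [elt, lmul, Module.End.mul_apply, Finsupp.single_apply, h.ne, mul_add, add_assoc]
  inv_val := by
    apply LinearMap.ext; intro x
    simp [elt, lmul, Module.End.mul_apply, Finsupp.single_apply, h.ne, mul_add, add_assoc]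

/-- The pattern subgroup `M(Γ) = ⟨M_{αβ} : (α,β) ∈ Γ⟩`. -/
noncomputable def patternSubgroup (R : Type*) [Ring R] (Λ : Type*) [PartialOrder Λ]
    (Γ : Set (Λ × Λ)) : Subgroup (E R Λ)ˣ :=
  Subgroup.closure {u | ∃ (α β : Λ) (h : α < β), (α, β) ∈ Γ ∧ ∃ r : R, u = rootUnit h r}


/-- A subset `Γ ⊆ Φ` is closed if `(α,β),(β,γ) ∈ Γ` implies `(α,γ) ∈ Γ`. -/
def IsClosedSubset {Λ : Type*} [PartialOrder Λ] (Γ : Set (Λ × Λ)) : Prop :=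
  ∀ α β γ : Λ, (α, β) ∈ Γ → (β, γ) ∈ Γ → (α, γ) ∈ Γ

/-- `Γ` is normal in `Γ₁`. -/
def IsNormalIn {Λ : Type*} [PartialOrder Λ] (Γ Γ₁ : Set (Λ × Λ)) : Prop :=
  (∀ α β γ : Λ, (α, β) ∈ Γ → (β, γ) ∈ Γ₁ → (α, γ) ∈ Γ) ∧
  (∀ α β γ : Λ, (α, β) ∈ Γ₁ → (β, γ) ∈ Γ → (α, γ) ∈ Γ)

theorem _root_.Subgroup.closure_le_normalizer_closure {G : Type*} [Group G] {S T : Set G}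
    (hT : ∀ t ∈ T, t⁻¹ ∈ T) (hconj : ∀ t ∈ T, ∀ s ∈ S, t * s * t⁻¹ ∈ Subgroup.closure S) :
    Subgroup.closure T ≤ Subgroup.normalizer (Subgroup.closure S : Set G) := by
  have conj_mem : ∀ t ∈ T, ∀ x ∈ Subgroup.closure S, t * x * t⁻¹ ∈ Subgroup.closure S := by
    intro t ht x hx
    have hle : (Subgroup.closure S).map (MulAut.conj t).toMonoidHom ≤ Subgroup.closure S := by
      rw [MonoidHom.map_closure, Subgroup.closure_le]
      rintro _ ⟨s, hs, rfl⟩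
      exact hconj t ht s hs
    exact hle ⟨x, hx, rfl⟩
  rw [Subgroup.closure_le]
  intro t ht
  refine Subgroup.mem_normalizer_iff.mpr fun x => ⟨conj_mem t ht x, fun hx => ?_⟩
  simpa [mul_assoc] using conj_mem t⁻¹ (hT t ht) _ hx

def _root_.NonUnitalSubring.oneAdd {A : Type*} [Ring A] (S : NonUnitalSubring A) :
    Submonoid A where
  carrier := {x | x - 1 ∈ S}
  one_mem' := by simp
  mul_mem' {x y} hx hy := by
    have : x * y - 1 = (x - 1) * (y - 1) + (x - 1) + (y - 1) := by noncomm_ring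
    change x * y - 1 ∈ S
    rw [this]
    exact add_mem (add_mem (mul_mem hx hy) hx) hy

theorem _root_.NonUnitalSubring.mem_oneAdd {A : Type*} [Ring A] {S : NonUnitalSubring A}
    {x : A} : x ∈ S.oneAdd ↔ x - 1 ∈ S :=
  Iff.rfl

theorem _root_.NonUnitalSubring.one_add_mem_oneAdd {A : Type*} [Ring A] {S : NonUnitalSubring A}
    {a : A} : 1 + a ∈ S.oneAdd ↔ a ∈ S := by
  rw [NonUnitalSubring.mem_oneAdd, add_sub_cancel_left]

section Matrix

variable {R : Type*} [Ring R] {Λ : Type*}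

theorem elt_apply (α β : Λ) (r : R) (f : Λ →₀ R) :
    elt α β r f = Finsupp.single α (r * f β) := rfl

theorem elt_mul_elt_same (α β δ : Λ) (r s : R) :
    (elt α β r : E R Λ) * elt β δ s = elt α δ (r * s) := by
  ext f
  simp [Module.End.mul_apply, elt_apply, mul_assoc]

theorem elt_mul_elt_of_ne {α β γ δ : Λ} {r s : R} (h : β ≠ γ) :
    (elt α β r : E R Λ) * elt γ δ s = 0 := by
  ext f
  simp [Module.End.mul_apply, elt_apply, Ne.symm h]

theorem elt_neg (α β : Λ) (r : R) : (elt α β (-r) : E R Λ) = -elt α β r := by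
  ext f
  simp [elt_apply]

noncomputable def entry (a : E R Λ) (α β : Λ) : R := a (Finsupp.single β 1) α

theorem apply_single_apply (a : E R Λ) (α β : Λ) (c : R) :
    a (Finsupp.single β c) α = entry a α β * c := by
  have : Finsupp.single β c = MulOpposite.op c • Finsupp.single β (1 : R) := by
    rw [Finsupp.smul_single, MulOpposite.smul_eq_mul_unop, MulOpposite.unop_op, one_mul]
  rw [this, map_smul, Finsupp.smul_apply, MulOpposite.smul_eq_mul_unop, MulOpposite.unop_op]
  rfl

theorem entry_mul (a b : E R Λ) (α γ : Λ) :
    entry (a * b) α γ = (b (Finsupp.single γ 1)).sum fun β c => entry a α β * c := by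
  conv_lhs => rw [entry, Module.End.mul_apply, ← Finsupp.sum_single (b _), map_finsuppSum]
  rw [Finsupp.sum_apply]
  simp only [apply_single_apply]

theorem entry_elt (α β : Λ) (r : R) : entry (elt α β r) α β = r := by
  simp [entry, elt_apply]

end Matrix

section Pattern

variable {R : Type*} [Ring R] {Λ : Type*} [PartialOrder Λ]

theorem rootUnit_val {α β : Λ} (h : α < β) (r : R) :
    (rootUnit h r : E R Λ) = 1 + elt α β r := rfl

theorem rootUnit_inv {α β : Λ} (h : α < β) (r : R) :
    (rootUnit h r : (E R Λ)ˣ)⁻¹ = rootUnit h (-r) :=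
  Units.ext rfl

theorem rootUnit_mem_patternSubgroup {Γ : Set (Λ × Λ)} {α β : Λ} (h : α < β)
    (hαβ : (α, β) ∈ Γ) (r : R) : rootUnit h r ∈ patternSubgroup R Λ Γ :=
  Subgroup.subset_closure ⟨α, β, h, hαβ, r, rfl⟩

theorem patternSubgroup_mono {Γ Γ' : Set (Λ × Λ)} (h : Γ ⊆ Γ') :
    patternSubgroup R Λ Γ ≤ patternSubgroup R Λ Γ' :=
  Subgroup.closure_mono fun _ ⟨α, β, hαβ, hΓ, r, hu⟩ => ⟨α, β, hαβ, h hΓ, r, hu⟩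

theorem rootUnit_conj_of_snd_eq_fst {α β δ : Λ} (h₁ : α < β) (h₂ : β < δ) (r s : R) :
    rootUnit h₁ r * rootUnit h₂ s * (rootUnit h₁ r)⁻¹
      = rootUnit h₂ s * rootUnit (h₁.trans h₂) (r * s) := by
  rw [mul_inv_eq_iff_eq_mul]
  ext1
  simp only [Units.val_mul, rootUnit_val, mul_add, add_mul, mul_one, one_mul,
    elt_mul_elt_same, elt_mul_elt_of_ne (h₁.trans h₂).ne', add_zero]
  abel

theorem rootUnit_conj_of_fst_eq_snd {α β γ : Λ} (h₁ : α < β) (h₂ : γ < α) (r s : R) :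
    rootUnit h₁ r * rootUnit h₂ s * (rootUnit h₁ r)⁻¹
      = rootUnit h₂ s * rootUnit (h₂.trans h₁) (-(s * r)) := by
  rw [mul_inv_eq_iff_eq_mul]
  ext1
  simp only [Units.val_mul, rootUnit_val, mul_add, add_mul, mul_one, one_mul,
    elt_mul_elt_same, elt_mul_elt_of_ne (h₂.trans h₁).ne',
    elt_mul_elt_of_ne h₂.ne', elt_mul_elt_of_ne h₁.ne', add_zero]
  rw [elt_neg]
  abel

theorem rootUnit_conj_of_ne {α β γ δ : Λ} (h₁ : α < β) (h₂ : γ < δ) (hβγ : β ≠ γ) (hδα : δ ≠ α)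
    (r s : R) : rootUnit h₁ r * rootUnit h₂ s * (rootUnit h₁ r)⁻¹ = rootUnit h₂ s := by
  rw [mul_inv_eq_iff_eq_mul]
  ext1
  simp only [Units.val_mul, rootUnit_val, mul_add, add_mul, mul_one, one_mul,
    elt_mul_elt_of_ne hβγ, elt_mul_elt_of_ne hδα, add_zero]
  abel

variable (R) in
def supportedOn (Γ : Set (Λ × Λ)) (hΓ : IsClosedSubset Γ) : NonUnitalSubring (E R Λ) where
  carrier := {a | ∀ α γ, (α, γ) ∉ Γ → entry a α γ = 0}
  zero_mem' _ _ _ := rfl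
  add_mem' {a b} ha hb α γ h := by
    change entry a α γ + entry b α γ = 0
    rw [ha α γ h, hb α γ h, add_zero]
  neg_mem' {a} ha α γ h := by
    change -entry a α γ = 0
    rw [ha α γ h, neg_zero]
  mul_mem' {a b} ha hb α γ h := by
    rw [entry_mul]
    refine Finset.sum_eq_zero fun β _ => ?_
    by_cases hβγ : (β, γ) ∈ Γ
    · change entry a α β * _ = 0
      rw [ha α β fun hαβ => h (hΓ α β γ hαβ hβγ), zero_mul]
    · change _ * entry b β γ = 0
      rw [hb β γ hβγ, mul_zero]

theorem elt_mem_supportedOn {Γ : Set (Λ × Λ)} (hΓ : IsClosedSubset Γ) {α β : Λ}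
    (hαβ : (α, β) ∈ Γ) (r : R) : elt α β r ∈ supportedOn R Γ hΓ := by
  intro α' γ h
  have : α' ≠ α ∨ γ ≠ β := by
    by_contra! hne
    exact h (hne.1 ▸ hne.2 ▸ hαβ)
  rcases this with hα | hγ
  · simp [entry, elt_apply, Ne.symm hα]
  · simp [entry, elt_apply, hγ]

theorem patternSubgroup_le_units_oneAdd {Γ : Set (Λ × Λ)} (hΓ : IsClosedSubset Γ) :
    patternSubgroup R Λ Γ ≤ (supportedOn R Γ hΓ).oneAdd.units := by
  rw [patternSubgroup, Subgroup.closure_le]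
  rintro _ ⟨α, β, h, hαβ, r, rfl⟩
  rw [SetLike.mem_coe, Submonoid.mem_units_iff, rootUnit_inv]
  exact ⟨NonUnitalSubring.one_add_mem_oneAdd.mpr (elt_mem_supportedOn hΓ hαβ r),
    NonUnitalSubring.one_add_mem_oneAdd.mpr (elt_mem_supportedOn hΓ hαβ (-r))⟩

theorem mem_of_rootUnit_mem_patternSubgroup {Γ : Set (Λ × Λ)} (hΓ : IsClosedSubset Γ)
    {α β : Λ} {h : α < β} {r : R} (hr : r ≠ 0) (hmem : rootUnit h r ∈ patternSubgroup R Λ Γ) :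
    (α, β) ∈ Γ := by
  by_contra hαβ
  have hsupp : elt α β r ∈ supportedOn R Γ hΓ := NonUnitalSubring.one_add_mem_oneAdd.mp
    ((Submonoid.mem_units_iff _ _).mp (patternSubgroup_le_units_oneAdd hΓ hmem)).1
  exact hr ((entry_elt α β r).symm.trans (hsupp α β hαβ))

end Pattern

section Normality

variable {R : Type*} [Ring R] {Λ : Type*} [PartialOrder Λ] {Γ Γ₁ : Set (Λ × Λ)}

theorem rootUnit_conj_mem_patternSubgroup (hN : IsNormalIn Γ Γ₁) {α β γ δ : Λ} (h₁ : α < β)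
    (h₂ : γ < δ) (hαβ : (α, β) ∈ Γ₁) (hγδ : (γ, δ) ∈ Γ) (r s : R) :
    rootUnit h₁ r * rootUnit h₂ s * (rootUnit h₁ r)⁻¹ ∈ patternSubgroup R Λ Γ := by
  by_cases hβγ : β = γ
  · subst hβγ
    rw [rootUnit_conj_of_snd_eq_fst]
    exact mul_mem (rootUnit_mem_patternSubgroup h₂ hγδ s)
      (rootUnit_mem_patternSubgroup _ (hN.2 α β δ hαβ hγδ) _)
  by_cases hδα : δ = α
  · subst hδα
    rw [rootUnit_conj_of_fst_eq_snd]
    exact mul_mem (rootUnit_mem_patternSubgroup h₂ hγδ s)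
      (rootUnit_mem_patternSubgroup _ (hN.1 γ δ β hγδ hαβ) _)
  rw [rootUnit_conj_of_ne h₁ h₂ hβγ hδα]
  exact rootUnit_mem_patternSubgroup h₂ hγδ s

theorem patternSubgroup_le_normalizer (hN : IsNormalIn Γ Γ₁) :
    patternSubgroup R Λ Γ₁ ≤ Subgroup.normalizer (patternSubgroup R Λ Γ : Set (E R Λ)ˣ) := by
  refine Subgroup.closure_le_normalizer_closure ?_ ?_
  · rintro _ ⟨α, β, h, hαβ, r, rfl⟩
    exact ⟨α, β, h, hαβ, -r, rootUnit_inv h r⟩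
  · rintro _ ⟨α, β, h₁, hαβ, r, rfl⟩ _ ⟨γ, δ, h₂, hγδ, s, rfl⟩
    exact rootUnit_conj_mem_patternSubgroup hN h₁ h₂ hαβ hγδ r s

theorem isNormalIn_of_le_normalizer [Nontrivial R] (hΦ : Γ₁ ⊆ {p : Λ × Λ | p.1 < p.2})
    (hsub : Γ ⊆ Γ₁) (hΓ : IsClosedSubset Γ)
    (hle : patternSubgroup R Λ Γ₁ ≤ Subgroup.normalizer (patternSubgroup R Λ Γ : Set (E R Λ)ˣ)) :
    IsNormalIn Γ Γ₁ := by
  have conj_mem {α β γ δ : Λ} (h₁ : α < β) (h₂ : γ < δ) (hαβ : (α, β) ∈ Γ₁) (hγδ : (γ, δ) ∈ Γ) :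
      rootUnit h₁ (1 : R) * rootUnit h₂ 1 * (rootUnit h₁ 1)⁻¹ ∈ patternSubgroup R Λ Γ :=
    (Subgroup.mem_normalizer_iff.mp (hle (rootUnit_mem_patternSubgroup h₁ hαβ 1)) _).mp
      (rootUnit_mem_patternSubgroup h₂ hγδ 1)
  constructor
  · intro α β γ hαβ hβγ
    have hconj := conj_mem (hΦ hβγ) (hΦ (hsub hαβ)) hβγ hαβ
    rw [rootUnit_conj_of_fst_eq_snd,
      Subgroup.mul_mem_cancel_left _ (rootUnit_mem_patternSubgroup _ hαβ 1)] at hconj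
    refine mem_of_rootUnit_mem_patternSubgroup hΓ ?_ hconj
    rw [mul_one, neg_ne_zero]
    exact one_ne_zero
  · intro α β γ hαβ hβγ
    have hconj := conj_mem (hΦ hαβ) (hΦ (hsub hβγ)) hαβ hβγ
    rw [rootUnit_conj_of_snd_eq_fst,
      Subgroup.mul_mem_cancel_left _ (rootUnit_mem_patternSubgroup _ hβγ 1)] at hconj
    refine mem_of_rootUnit_mem_patternSubgroup hΓ ?_ hconj
    rw [mul_one]
    exact one_ne_zero

end Normality

theorem patternSubgroup_normal_iff_general (R : Type*) [Ring R] [Nontrivial R]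
    (Λ : Type*) [PartialOrder Λ] (Γ Γ₁ : Set (Λ × Λ))
    (hΦ : Γ₁ ⊆ {p : Λ × Λ | p.1 < p.2}) (hsub : Γ ⊆ Γ₁)
    (hΓ : IsClosedSubset Γ) :
    ((patternSubgroup R Λ Γ).subgroupOf (patternSubgroup R Λ Γ₁)).Normal ↔
      IsNormalIn Γ Γ₁ := by
  rw [Subgroup.normal_subgroupOf_iff_le_normalizer (patternSubgroup_mono hsub)]
  exact ⟨isNormalIn_of_le_normalizer hΦ hsub hΓ, patternSubgroup_le_normalizer⟩

/-- For closed `Γ ⊆ Γ₁ ⊆ Φ`, the pattern subgroup `M(Γ)` is normal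
in `M(Γ₁)` if and only if `Γ` is normal in `Γ₁`. -/
theorem patternSubgroup_normal_iff (R : Type*) [Ring R] [Nontrivial R]
    (Λ : Type*) [PartialOrder Λ] (Γ Γ₁ : Set (Λ × Λ))
    (hΦ : Γ₁ ⊆ {p : Λ × Λ | p.1 < p.2}) (hsub : Γ ⊆ Γ₁)
    (hΓ : IsClosedSubset Γ) (hΓ₁ : IsClosedSubset Γ₁) :
    ((patternSubgroup R Λ Γ).subgroupOf (patternSubgroup R Λ Γ₁)).Normal ↔
      IsNormalIn Γ Γ₁ :=
  patternSubgroup_normal_iff_general R Λ Γ Γ₁ hΦ hsub hΓ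

end McLain
end

section
/- Let R be a ring admitting a right primitive linear character λ : R⁺ → F* (a group homomorphism from the additive group of R to the multiplicative group of a field F whose kernel contains no nonzero right ideal). If F has prime characteristic p, then the additive group R⁺ has no element of order p. -/
/-- `I` is a right ideal of `R` (as a set): closed under addition, negation,
contains `0`, and is closed under right multiplication by arbitrary ring elements. -/
def IsRightIdealSet {R : Type*} [Ring R] (I : Set R) : Prop :=
  (0 : R) ∈ I ∧ (∀ a ∈ I, ∀ b ∈ I, a + b ∈ I) ∧ (∀ a ∈ I, -a ∈ I) ∧
    (∀ a ∈ I, ∀ r : R, a * r ∈ I)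

/-- `l : R⁺ → F*` is a linear character: a homomorphism from the additive group of `R`
to the multiplicative group of `F`. -/
def IsLinearCharacter {R : Type*} [Ring R] {F : Type*} [Field F] (l : R → Fˣ) : Prop :=
  ∀ a b : R, l (a + b) = l a * l b

/-- `l` is right primitive: the only right ideal of `R` contained in its kernel is `(0)`. -/
def IsRightPrimitive {R : Type*} [Ring R] {F : Type*} [Field F] (l : R → Fˣ) : Prop :=
  ∀ I : Set R, IsRightIdealSet I → (∀ a ∈ I, l a = 1) → I = {0}

/-!
The `p`-torsion `{x | p • x = 0}` of `R⁺` is a right ideal. On it `λ` takes values `u` with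
`u ^ p = 1`, and in characteristic `p` the Frobenius map is injective, so `u = 1`. Primitivity
then forces the `p`-torsion to vanish, whereas an element of order `p` would be nonzero `p`-torsion.
-/

lemma eq_one_of_pow_expChar_eq_one {K : Type*} [CommRing K] [IsReduced K] {p : ℕ} [ExpChar K p]
    {x : K} (h : x ^ p = 1) : x = 1 :=
  frobenius_inj K p (by rw [frobenius_def, h, map_one])

namespace IsLinearCharacter

variable {R : Type*} [Ring R] {F : Type*} [Field F] {l : R → Fˣ}

def toAddChar (hl : IsLinearCharacter l) : AddChar R Fˣ where
  toFun := l
  map_zero_eq_one' := by simpa using hl 0 0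
  map_add_eq_mul' := hl

lemma map_zero (hl : IsLinearCharacter l) : l 0 = 1 :=
  hl.toAddChar.map_zero_eq_one

lemma map_nsmul_eq_pow (hl : IsLinearCharacter l) (n : ℕ) (x : R) : l (n • x) = l x ^ n :=
  hl.toAddChar.map_nsmul_eq_pow n x

lemma map_eq_one_of_nsmul_eq_zero (hl : IsLinearCharacter l) (p : ℕ) [ExpChar F p] {x : R}
    (hx : p • x = 0) : l x = 1 := by
  have hpow : (l x : F) ^ p = 1 := by
    rw [← Units.val_pow_eq_pow_val, ← hl.map_nsmul_eq_pow, hx, hl.map_zero, Units.val_one]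
  exact Units.val_eq_one.1 (eq_one_of_pow_expChar_eq_one hpow)

end IsLinearCharacter

lemma isRightIdealSet_setOf_nsmul_eq_zero {R : Type*} [Ring R] (n : ℕ) :
    IsRightIdealSet {x : R | n • x = 0} := by
  refine ⟨smul_zero n, fun a (ha : n • a = 0) b (hb : n • b = 0) => ?_,
    fun a (ha : n • a = 0) => ?_, fun a (ha : n • a = 0) r => ?_⟩
  · rw [Set.mem_ofPred_eq, smul_add, ha, hb, add_zero]
  · rw [Set.mem_ofPred_eq, smul_neg, ha, neg_zero]
  · rw [Set.mem_ofPred_eq, ← smul_mul_assoc, ha, zero_mul]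

namespace IsRightPrimitive

variable {R : Type*} [Ring R] {F : Type*} [Field F] {l : R → Fˣ}

lemma eq_zero_of_mem (hprim : IsRightPrimitive l) {I : Set R} (hI : IsRightIdealSet I)
    (hker : ∀ a ∈ I, l a = 1) {a : R} (ha : a ∈ I) : a = 0 :=
  Set.mem_singleton_iff.1 (hprim I hI hker ▸ ha)

lemma eq_zero_of_nsmul_eq_zero (hprim : IsRightPrimitive l) (hl : IsLinearCharacter l)
    (p : ℕ) [ExpChar F p] {r : R} (hr : p • r = 0) : r = 0 :=
  hprim.eq_zero_of_mem (isRightIdealSet_setOf_nsmul_eq_zero p)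
    (fun _ ha => hl.map_eq_one_of_nsmul_eq_zero p ha) hr

end IsRightPrimitive

/-- If `R` admits a right primitive linear character `R⁺ → F*` and `F`
has prime characteristic `p`, then the additive group `R⁺` has no element of order `p`. -/
theorem no_element_of_order_char {R : Type*} [Ring R] {F : Type*} [Field F]
    (p : ℕ) [CharP F p] (hp : p.Prime)
    (l : R → Fˣ) (hl : IsLinearCharacter l) (hprim : IsRightPrimitive l) :
    ∀ r : R, addOrderOf r ≠ p := by
  intro r hr
  have : ExpChar F p := ExpChar.prime hp
  have hr0 : r = 0 := hprim.eq_zero_of_nsmul_eq_zero hl p (hr ▸ addOrderOf_nsmul_eq_zero r)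
  rw [hr0, addOrderOf_zero] at hr
  exact hp.ne_one hr.symm
end

section
/- Let R be a ring whose additive group R⁺ has finite exponent, and suppose R admits a right primitive linear character λ : R⁺ → F*. Then F* contains a root of unity of order exactly exp(R⁺). -/
theorem isRightIdealSet_range_nsmul {R : Type*} [Ring R] (d : ℕ) :
    IsRightIdealSet (Set.range fun a : R => d • a) := by
  refine ⟨⟨0, smul_zero d⟩, ?_, ?_, ?_⟩
  · rintro _ ⟨a, rfl⟩ _ ⟨b, rfl⟩
    exact ⟨a + b, smul_add d a b⟩
  · rintro _ ⟨a, rfl⟩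
    exact ⟨-a, smul_neg d a⟩
  · rintro _ ⟨a, rfl⟩ r
    exact ⟨a * r, (smul_mul_assoc d a r).symm⟩

section LinearCharacter

variable {R : Type*} [Ring R] {F : Type*} [Field F] {l : R → Fˣ}

theorem IsLinearCharacter.map_zero_s8 (hl : IsLinearCharacter l) : l 0 = 1 :=
  left_eq_mul.mp (by rw [← hl 0 0, add_zero])

theorem IsLinearCharacter.map_nsmul (hl : IsLinearCharacter l) (k : ℕ) (a : R) :
    l (k • a) = l a ^ k := by
  induction k with
  | zero => simpa using hl.map_zero_s8
  | succ k ih => rw [succ_nsmul, hl, ih, pow_succ]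

theorem IsLinearCharacter.mem_rootsOfUnity_exponent (hl : IsLinearCharacter l) (a : R) :
    l a ∈ rootsOfUnity (AddMonoid.exponent R) F := by
  rw [mem_rootsOfUnity, ← hl.map_nsmul, AddMonoid.exponent_nsmul_eq_zero, hl.map_zero_s8]

theorem IsRightPrimitive.exponent_dvd_of_forall_pow_eq_one (hprim : IsRightPrimitive l)
    (hl : IsLinearCharacter l) {d : ℕ} (hd : ∀ a, l a ^ d = 1) :
    AddMonoid.exponent R ∣ d := by
  have hzero : (Set.range fun a : R => d • a) = {0} :=
    hprim _ (isRightIdealSet_range_nsmul d) (by rintro _ ⟨a, rfl⟩; rw [hl.map_nsmul, hd])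
  exact AddMonoid.exponent_dvd_of_forall_nsmul_eq_zero fun a =>
    Set.mem_singleton_iff.mp (hzero ▸ ⟨a, rfl⟩)

end LinearCharacter

/-- If the additive group `R⁺` has finite exponent and `R` admits a right
primitive linear character `R⁺ → F*`, then `F*` has a root of unity of order exactly
`exp(R⁺)`. -/
theorem exists_root_of_unity_of_exponent {R : Type*} [Ring R] {F : Type*} [Field F]
    (hexp : AddMonoid.exponent R ≠ 0)
    (l : R → Fˣ) (hl : IsLinearCharacter l) (hprim : IsRightPrimitive l) :
    ∃ ζ : Fˣ, orderOf ζ = AddMonoid.exponent R := by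
  set n := AddMonoid.exponent R
  have hexists : Monoid.ExponentExists (rootsOfUnity n F) :=
    ⟨n, Nat.pos_of_ne_zero hexp, fun x => Subtype.ext x.2⟩
  obtain ⟨ζ, hζ⟩ := Monoid.exists_orderOf_eq_exponent hexists
  have hdvd : Monoid.exponent (rootsOfUnity n F) ∣ n :=
    Monoid.exponent_dvd_of_forall_pow_eq_one fun x => Subtype.ext x.2
  have hdvd' : n ∣ Monoid.exponent (rootsOfUnity n F) :=
    hprim.exponent_dvd_of_forall_pow_eq_one hl fun a =>
      congrArg Subtype.val (Monoid.pow_exponent_eq_one ⟨l a, hl.mem_rootsOfUnity_exponent a⟩)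
  exact ⟨ζ, by rw [Subgroup.orderOf_coe, hζ, Nat.dvd_antisymm hdvd hdvd']⟩
end

section
/- Let Λ be totally ordered, D = {(α₁,β₁),…,(α_m,β_m)} a basic subset of Φ (all α_i distinct and all β_i distinct), Γ = Φ \ ⋃_i [α_i,→,β_i) where [α,→,β) = {(α,γ) ∈ Φ : γ < β}, and Ω = {(α,γ) ∈ Φ : ∃(α,β),(γ,δ) ∈ D with α < γ < β < δ}. Then Γ₁ = Γ ∪ Ω is a closed subset of Φ, the union being disjoint. -/
/-!
Since no two elements of `D` share a first coordinate, `(a, c)` can only be removed from `Φ` by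
the unique `(a, β) ∈ D`, namely when `c < β`. So `Γ` is upward closed in the second coordinate,
and a composite through `Ω` either stays below `β`, landing in `Ω`, or passes `β`, landing in `Γ`.
-/

namespace BasicSet

variable {Λ : Type*} [LinearOrder Λ] {D : Set (Λ × Λ)} {a b c β δ : Λ}

def gammaSet (D : Set (Λ × Λ)) : Set (Λ × Λ) :=
  {p | p.1 < p.2 ∧ ¬ ∃ q ∈ D, p.1 = q.1 ∧ p.2 < q.2}

def omegaSet (D : Set (Λ × Λ)) : Set (Λ × Λ) :=
  {p | p.1 < p.2 ∧ ∃ β δ : Λ, (p.1, β) ∈ D ∧ (p.2, δ) ∈ D ∧ p.2 < β ∧ β < δ}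

theorem disjoint_gammaSet_omegaSet (D : Set (Λ × Λ)) : Disjoint (gammaSet D) (omegaSet D) := by
  rw [Set.disjoint_left]
  rintro ⟨a, b⟩ ⟨-, hfree⟩ ⟨-, β, -, hβ, -, hbβ, -⟩
  exact hfree ⟨(a, β), hβ, rfl, hbβ⟩

theorem lt_of_mem_gammaSet_union_omegaSet (h : (a, b) ∈ gammaSet D ∪ omegaSet D) : a < b :=
  h.elim (·.1) (·.1)

theorem mem_gammaSet_of_lt (hab : (a, b) ∈ gammaSet D) (hbc : b < c) : (a, c) ∈ gammaSet D :=
  ⟨hab.1.trans hbc, fun ⟨q, hq, he, hlt⟩ => hab.2 ⟨q, hq, he, hbc.trans hlt⟩⟩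

theorem le_of_mem_gammaSet (hbc : (b, c) ∈ gammaSet D) (hδ : (b, δ) ∈ D) : δ ≤ c :=
  le_of_not_gt fun hcδ => hbc.2 ⟨(b, δ), hδ, rfl, hcδ⟩

theorem mem_gammaSet_of_le (hD : D.InjOn Prod.fst) (hβ : (a, β) ∈ D) (hac : a < c)
    (hβc : β ≤ c) : (a, c) ∈ gammaSet D := by
  refine ⟨hac, ?_⟩
  rintro ⟨q, hq, rfl, hcq⟩
  rw [← hD hβ hq rfl] at hcq
  exact hcq.not_ge hβc

theorem mem_gammaSet_union_omegaSet_of_mem_omegaSet (hD : D.InjOn Prod.fst)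
    (hab : (a, b) ∈ omegaSet D) (hbc : (b, c) ∈ gammaSet D ∪ omegaSet D) :
    (a, c) ∈ gammaSet D ∪ omegaSet D := by
  obtain ⟨hab, β, δ, hβ, hδ, -, hβδ⟩ := hab
  have hac := hab.trans (lt_of_mem_gammaSet_union_omegaSet hbc)
  rcases hbc with hbc | ⟨-, β', δ', hβ', hδ', -, hβ'δ'⟩
  · exact Or.inl (mem_gammaSet_of_le hD hβ hac (hβδ.le.trans (le_of_mem_gammaSet hbc hδ)))
  · have hδβ' : δ = β' := congrArg Prod.snd (hD hδ hβ' rfl)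
    rcases lt_or_ge c β with hcβ | hβc
    · exact Or.inr ⟨hac, β, δ', hβ, hδ', hcβ, hβδ.trans (hδβ' ▸ hβ'δ')⟩
    · exact Or.inl (mem_gammaSet_of_le hD hβ hac hβc)

end BasicSet

open BasicSet in
theorem gammaOne_closed_general {Λ : Type*} [LinearOrder Λ] (D : Finset (Λ × Λ))
    (hbasic₁ : ∀ p ∈ D, ∀ q ∈ D, p.1 = q.1 → p = q)
    (Γ Ω : Set (Λ × Λ))
    (hΓ : Γ = {p : Λ × Λ | p.1 < p.2 ∧ ¬ ∃ q ∈ D, p.1 = q.1 ∧ p.2 < q.2})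
    (hΩ : Ω = {p : Λ × Λ | p.1 < p.2 ∧
      ∃ β δ : Λ, (p.1, β) ∈ D ∧ (p.2, δ) ∈ D ∧ p.2 < β ∧ β < δ}) :
    Disjoint Γ Ω ∧
      ∀ a b c : Λ, (a, b) ∈ Γ ∪ Ω → (b, c) ∈ Γ ∪ Ω → (a, c) ∈ Γ ∪ Ω := by
  have hΓ : Γ = gammaSet (D : Set (Λ × Λ)) := hΓ
  have hΩ : Ω = omegaSet (D : Set (Λ × Λ)) := hΩ
  have hD : (D : Set (Λ × Λ)).InjOn Prod.fst := hbasic₁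
  subst hΓ hΩ
  refine ⟨disjoint_gammaSet_omegaSet _, fun a b c hab hbc => ?_⟩
  rcases hab with hab | hab
  · exact Or.inl (mem_gammaSet_of_lt hab (lt_of_mem_gammaSet_union_omegaSet hbc))
  · exact mem_gammaSet_union_omegaSet_of_mem_omegaSet hD hab hbc

/-- Let `Λ` be totally ordered and `D` a basic subset of
`Φ = {(α,β) : α < β}` (all first coordinates distinct, all second coordinates
distinct).  With `Γ = Φ \ ⋃_{(α,β) ∈ D} [α,→,β)` where `[α,→,β) = {(α,γ) ∈ Φ : γ < β}`,
and `Ω = {(α,γ) ∈ Φ : ∃ (α,β),(γ,δ) ∈ D, α < γ < β < δ}`, the union `Γ₁ = Γ ∪ Ω` is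
disjoint and `Γ₁` is a closed subset of `Φ`. -/
theorem gammaOne_closed {Λ : Type*} [LinearOrder Λ] (D : Finset (Λ × Λ))
    (hD : ∀ p ∈ D, p.1 < p.2)
    (hbasic₁ : ∀ p ∈ D, ∀ q ∈ D, p.1 = q.1 → p = q)
    (hbasic₂ : ∀ p ∈ D, ∀ q ∈ D, p.2 = q.2 → p = q)
    (Γ Ω : Set (Λ × Λ))
    (hΓ : Γ = {p : Λ × Λ | p.1 < p.2 ∧ ¬ ∃ q ∈ D, p.1 = q.1 ∧ p.2 < q.2})
    (hΩ : Ω = {p : Λ × Λ | p.1 < p.2 ∧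
      ∃ β δ : Λ, (p.1, β) ∈ D ∧ (p.2, δ) ∈ D ∧ p.2 < β ∧ β < δ}) :
    Disjoint Γ Ω ∧
      ∀ a b c : Λ, (a, b) ∈ Γ ∪ Ω → (b, c) ∈ Γ ∪ Ω → (a, c) ∈ Γ ∪ Ω :=
  gammaOne_closed_general D hbasic₁ Γ Ω hΓ hΩ
end

section
/- With Λ totally ordered, D a basic subset of Φ, and Ω, Γ, Γ₁ = Γ ∪ Ω as above: [Γ₁,Γ₁] ∩ D = [Ω,Ω] ∩ D, and these intersections are nonempty if and only if D contains a special triple, i.e., a subset {(α₁,β₁),(α₂,β₂),(α₃,β₃)} ⊆ D with α₁ < α₂ < α₃ = β₁ < β₂ < β₃. -/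
/-!
Let `(α, β) ∈ D` be joined by a chain `α = c₀ < c₁ < ⋯ < cₘ = β` of links of `Γ ∪ Ω`.
A link `(a, b)` with `(a, d) ∈ D` and `b < d` cannot lie in `Γ`, so it lies in `Ω`, and
since `D` is basic its `Ω`-witness starting at `a` is `(a, d)` itself: thus `(b, d') ∈ D` for
some `d' > d`. Starting from `(α, β)` this propagates along the whole chain, producing
`(cᵢ, dᵢ) ∈ D` with `β < d₁ < d₂ < ⋯`; the last two of these, `(cₘ₋₁, dₘ₋₁)` and
`(β, dₘ)`, complete `(α, β)` to a special triple. Conversely a special triple `p, q, s`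
exhibits `p` as the two-link `Ω`-chain `p.1, q.1, s.1`.
-/

/-- `[Δ,Δ]`: the set of pairs `(α,β)` joined by a chain of at least two links of `Δ`. -/
def chainSet {Λ : Type*} (Δ : Set (Λ × Λ)) : Set (Λ × Λ) :=
  {p | ∃ (n : ℕ) (c : Fin (n + 3) → Λ), c 0 = p.1 ∧ c (Fin.last (n + 2)) = p.2 ∧
    ∀ i : Fin (n + 2), (c i.castSucc, c i.succ) ∈ Δ}

/-- `D` has a special triple: `{(α₁,β₁),(α₂,β₂),(α₃,β₃)} ⊆ D` with
`α₁ < α₂ < α₃ = β₁ < β₂ < β₃`. -/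
def HasSpecialTriple {Λ : Type*} [LinearOrder Λ] (D : Finset (Λ × Λ)) : Prop :=
  ∃ p ∈ D, ∃ q ∈ D, ∃ s ∈ D,
    p.1 < q.1 ∧ q.1 < s.1 ∧ s.1 = p.2 ∧ p.2 < q.2 ∧ q.2 < s.2

open Relation

theorem transGen_of_fin_chain {α : Type*} {r : α → α → Prop} {k : ℕ} (c : Fin (k + 2) → α)
    (hc : ∀ i : Fin (k + 1), r (c i.castSucc) (c i.succ)) :
    TransGen r (c 0) (c (Fin.last (k + 1))) := by
  have : ∀ i : Fin (k + 1), TransGen r (c 0) (c i.succ) := by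
    refine Fin.induction (.single (hc 0)) fun i hi => hi.tail ?_
    rw [Fin.succ_castSucc]
    exact hc i.succ
  exact this (Fin.last k)

theorem exists_transGen_of_mem_chainSet {Λ : Type*} {Δ : Set (Λ × Λ)} {p : Λ × Λ}
    (hp : p ∈ chainSet Δ) : ∃ m, (p.1, m) ∈ Δ ∧ TransGen (fun a b => (a, b) ∈ Δ) m p.2 := by
  obtain ⟨n, c, hfirst, hlast, hlinks⟩ := hp
  refine ⟨c 1, hfirst ▸ hlinks 0, hlast ▸ transGen_of_fin_chain (c ∘ Fin.succ) fun i => ?_⟩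
  simpa only [Function.comp_apply, Fin.succ_castSucc] using hlinks i.succ

theorem chainSet_mono {Λ : Type*} {Δ Δ' : Set (Λ × Λ)} (h : Δ ⊆ Δ') :
    chainSet Δ ⊆ chainSet Δ' := by
  rintro p ⟨n, c, hfirst, hlast, hlinks⟩
  exact ⟨n, c, hfirst, hlast, fun i => h (hlinks i)⟩

section Basic

variable {Λ : Type*} [LinearOrder Λ] (D : Finset (Λ × Λ))

def gammaSet : Set (Λ × Λ) :=
  {p | p.1 < p.2 ∧ ¬ ∃ q ∈ D, p.1 = q.1 ∧ p.2 < q.2}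

def omegaSet : Set (Λ × Λ) :=
  {p | p.1 < p.2 ∧ ∃ β δ : Λ, (p.1, β) ∈ D ∧ (p.2, δ) ∈ D ∧ p.2 < β ∧ β < δ}

def IsSpecialTriple (p q s : Λ × Λ) : Prop :=
  p.1 < q.1 ∧ q.1 < s.1 ∧ s.1 = p.2 ∧ p.2 < q.2 ∧ q.2 < s.2

variable {D}

theorem fst_lt_snd_of_mem_gammaSet_union {x : Λ × Λ} (hx : x ∈ gammaSet D ∪ omegaSet D) :
    x.1 < x.2 := by
  rcases hx with hx | hx
  exacts [hx.1, hx.1]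

theorem lt_of_transGen_gammaSet_union {a b : Λ}
    (h : TransGen (fun a b => (a, b) ∈ gammaSet D ∪ omegaSet D) a b) : a < b := by
  have : TransGen (· < ·) a b :=
    TransGen.mono (fun _ _ => fst_lt_snd_of_mem_gammaSet_union) a b h
  rwa [transGen_eq_self] at this

variable (hbasic : ∀ p ∈ D, ∀ q ∈ D, p.1 = q.1 → p = q)
include hbasic

theorem exists_lt_of_link {a b d : Λ} (had : (a, d) ∈ D)
    (hab : (a, b) ∈ gammaSet D ∪ omegaSet D) (hbd : b < d) : ∃ d', d < d' ∧ (b, d') ∈ D := by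
  rcases hab with hΓ | ⟨-, β, δ, haβ, hbδ, -, hβδ⟩
  · exact absurd ⟨(a, d), had, rfl, hbd⟩ hΓ.2
  · obtain rfl : β = d := congrArg Prod.snd (hbasic _ haβ _ had rfl)
    exact ⟨δ, hβδ, hbδ⟩

theorem exists_last_links_of_transGen {a b d : Λ}
    (h : TransGen (fun a b => (a, b) ∈ gammaSet D ∪ omegaSet D) a b) (had : (a, d) ∈ D)
    (hbd : b < d) :
    ∃ x d₁ d₂, a ≤ x ∧ x < b ∧ (x, d₁) ∈ D ∧ (b, d₂) ∈ D ∧ d ≤ d₁ ∧ d₁ < d₂ := by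
  induction h using TransGen.head_induction_on generalizing d with
  | single hab =>
    obtain ⟨d', hdd', hbd'⟩ := exists_lt_of_link hbasic had hab hbd
    exact ⟨_, d, d', le_rfl, fst_lt_snd_of_mem_gammaSet_union hab, had, hbd', le_rfl, hdd'⟩
  | head hac hcb ih =>
    obtain ⟨d', hdd', hcd'⟩ :=
      exists_lt_of_link hbasic had hac ((lt_of_transGen_gammaSet_union hcb).trans hbd)
    obtain ⟨x, d₁, d₂, hcx, hxb, hxd₁, hbd₂, hd'd₁, hd₁d₂⟩ := ih hcd' (hbd.trans hdd')
    exact ⟨x, d₁, d₂, (fst_lt_snd_of_mem_gammaSet_union hac).le.trans hcx, hxb, hxd₁, hbd₂,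
      hdd'.le.trans hd'd₁, hd₁d₂⟩

theorem exists_isSpecialTriple_of_mem_chainSet {p : Λ × Λ} (hpD : p ∈ D)
    (hp : p ∈ chainSet (gammaSet D ∪ omegaSet D)) :
    ∃ q ∈ D, ∃ s ∈ D, IsSpecialTriple p q s := by
  obtain ⟨m, hlink, hchain⟩ := exists_transGen_of_mem_chainSet hp
  obtain ⟨d, hpd, hmd⟩ :=
    exists_lt_of_link hbasic hpD hlink (lt_of_transGen_gammaSet_union hchain)
  obtain ⟨x, d₁, d₂, hmx, hxβ, hxd₁, hβd₂, hdd₁, hd₁d₂⟩ :=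
    exists_last_links_of_transGen hbasic hchain hmd hpd
  exact ⟨(x, d₁), hxd₁, (p.2, d₂), hβd₂,
    (fst_lt_snd_of_mem_gammaSet_union hlink).trans_le hmx, hxβ, rfl, hpd.trans_le hdd₁, hd₁d₂⟩

omit hbasic

theorem mem_chainSet_omegaSet_of_isSpecialTriple {p q s : Λ × Λ} (hp : p ∈ D) (hq : q ∈ D)
    (hs : s ∈ D) (h : IsSpecialTriple p q s) : p ∈ chainSet (omegaSet D) := by
  obtain ⟨h₁, h₂, h₃, h₄, h₅⟩ := h
  refine ⟨0, ![p.1, q.1, s.1], rfl, h₃, fun i => ?_⟩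
  fin_cases i
  · exact ⟨h₁, p.2, q.2, hp, hq, h₃ ▸ h₂, h₄⟩
  · exact ⟨h₂, q.2, s.2, hq, hs, h₃ ▸ h₄, h₅⟩

end Basic

theorem chainSet_inter_basic_general {Λ : Type*} [LinearOrder Λ] (D : Finset (Λ × Λ))
    (hbasic₁ : ∀ p ∈ D, ∀ q ∈ D, p.1 = q.1 → p = q)
    (Γ Ω : Set (Λ × Λ))
    (hΓ : Γ = {p : Λ × Λ | p.1 < p.2 ∧ ¬ ∃ q ∈ D, p.1 = q.1 ∧ p.2 < q.2})
    (hΩ : Ω = {p : Λ × Λ | p.1 < p.2 ∧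
      ∃ β δ : Λ, (p.1, β) ∈ D ∧ (p.2, δ) ∈ D ∧ p.2 < β ∧ β < δ}) :
    chainSet (Γ ∪ Ω) ∩ ↑D = chainSet Ω ∩ ↑D ∧
      ((chainSet (Γ ∪ Ω) ∩ ↑D).Nonempty ↔ HasSpecialTriple D) := by
  obtain rfl : Γ = gammaSet D := hΓ
  obtain rfl : Ω = omegaSet D := hΩ
  have hsub : chainSet (omegaSet D) ⊆ chainSet (gammaSet D ∪ omegaSet D) :=
    chainSet_mono Set.subset_union_right
  refine ⟨(Set.inter_subset_inter_left _ hsub).antisymm' ?_, ?_, ?_⟩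
  · rintro p ⟨hp, hpD⟩
    obtain ⟨q, hq, s, hs, hpqs⟩ := exists_isSpecialTriple_of_mem_chainSet hbasic₁ hpD hp
    exact ⟨mem_chainSet_omegaSet_of_isSpecialTriple hpD hq hs hpqs, hpD⟩
  · rintro ⟨p, hp, hpD⟩
    exact ⟨p, hpD, exists_isSpecialTriple_of_mem_chainSet hbasic₁ hpD hp⟩
  · rintro ⟨p, hpD, q, hq, s, hs, hpqs⟩
    exact ⟨p, hsub (mem_chainSet_omegaSet_of_isSpecialTriple hpD hq hs hpqs), hpD⟩

/-- With `Λ` totally ordered, `D` basic, and `Γ`, `Ω`, `Γ₁ = Γ ∪ Ω`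
as usual: `[Γ₁,Γ₁] ∩ D = [Ω,Ω] ∩ D`, and these are nonempty iff `D` contains a
special triple. -/
theorem chainSet_inter_basic {Λ : Type*} [LinearOrder Λ] (D : Finset (Λ × Λ))
    (hD : ∀ p ∈ D, p.1 < p.2)
    (hbasic₁ : ∀ p ∈ D, ∀ q ∈ D, p.1 = q.1 → p = q)
    (hbasic₂ : ∀ p ∈ D, ∀ q ∈ D, p.2 = q.2 → p = q)
    (Γ Ω : Set (Λ × Λ))
    (hΓ : Γ = {p : Λ × Λ | p.1 < p.2 ∧ ¬ ∃ q ∈ D, p.1 = q.1 ∧ p.2 < q.2})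
    (hΩ : Ω = {p : Λ × Λ | p.1 < p.2 ∧
      ∃ β δ : Λ, (p.1, β) ∈ D ∧ (p.2, δ) ∈ D ∧ p.2 < β ∧ β < δ}) :
    chainSet (Γ ∪ Ω) ∩ ↑D = chainSet Ω ∩ ↑D ∧
      ((chainSet (Γ ∪ Ω) ∩ ↑D).Nonempty ↔ HasSpecialTriple D) :=
  chainSet_inter_basic_general D hbasic₁ Γ Ω hΓ hΩ
end
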